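/- Let K be an imaginary quadratic number field with ring of integers O_K. Then for every complex number α not in K, there exist infinitely many pairs (a,q) with a, q in O_K and q nonzero such that |α - a/q| ≤ C/N(q), where N(q) is the absolute norm of q and C is a constant depending only on K. -/

import Mathlib

/-!
Pick `ω ∈ 𝓞 K` with `ι ω ∉ ℝ`, so that `1, ι ω` is an `ℝ`-basis of `ℂ`. Pigeonholing the
`(N + 1)²` points `(m + n ι ω) α`, `0 ≤ m, n ≤ N`, modulo the lattice `ℤ + ℤ ι ω` into `N²`
boxes gives `q = m + n ω ≠ 0` and `a ∈ ℤ + ℤ ω` with `|ι q| ≤ N (1 + |ι ω|)` and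
`|ι q α - ι a| ≤ (1 + |ι ω|) / N`; hence `|α - ι a / ι q| ≤ (1 + |ι ω|)² / |ι q|²`, and
`|ι q|² = N(q)` because `ι` and its conjugate are the two embeddings of `K`. Since `α ∉ ι K`,
`|ι q α - ι a|` is never `0` but can be made arbitrarily small, so there are infinitely many
such pairs.
-/

open NumberField

theorem Set.infinite_of_forall_exists_pos_lt {α : Type*} {s : Set α} (f : α → ℝ)
    (hpos : ∀ x ∈ s, 0 < f x) (h : ∀ ε > 0, ∃ x ∈ s, f x < ε) : s.Infinite := by
  intro hfin
  obtain ⟨x₀, hx₀, -⟩ := h 1 one_pos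
  obtain ⟨x, hx, hmin⟩ := Set.exists_min_image s f hfin ⟨x₀, hx₀⟩
  obtain ⟨y, hy, hlt⟩ := h (f x) (hpos x hx)
  exact (hmin y hy).not_gt hlt

theorem Finset.exists_ne_abs_sub_sub_intCast_lt {α : Type*} (s : Finset α) {N : ℕ} (hN : 0 < N)
    (hs : N ^ 2 < s.card) (u v : α → ℝ) :
    ∃ p ∈ s, ∃ p' ∈ s, p ≠ p' ∧ ∃ k l : ℤ,
      |u p - u p' - k| < 1 / N ∧ |v p - v p' - l| < 1 / N := by
  have hNR : (0 : ℝ) < N := by exact_mod_cast hN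
  set box : ℝ → ℤ := fun x => ⌊N * Int.fract x⌋
  have hbox : ∀ x, box x ∈ Finset.Ico (0 : ℤ) N := fun x => by
    simp only [box, Finset.mem_Ico, Int.floor_nonneg, Int.floor_lt]
    exact ⟨by positivity, by push_cast; nlinarith [Int.fract_lt_one x]⟩
  have hcard : (Finset.Ico (0 : ℤ) N ×ˢ Finset.Ico (0 : ℤ) N).card < s.card := by
    simpa [sq] using hs
  obtain ⟨p, hp, p', hp', hne, heq⟩ := Finset.exists_ne_map_eq_of_card_lt_of_maps_to hcard
    (f := fun p => (box (u p), box (v p))) fun p _ => Finset.mem_product.2 ⟨hbox _, hbox _⟩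
  have close : ∀ x y, box x = box y → |x - y - (⌊x⌋ - ⌊y⌋ : ℤ)| < 1 / N := fun x y hxy => by
    have h := Int.abs_sub_lt_one_of_floor_eq_floor hxy
    rw [← mul_sub, abs_mul, abs_of_pos hNR] at h
    have hfract : x - y - (⌊x⌋ - ⌊y⌋ : ℤ) = Int.fract x - Int.fract y := by
      push_cast [Int.fract]; ring
    rwa [hfract, lt_div_iff₀ hNR, mul_comm]
  exact ⟨p, hp, p', hp', hne, _, _, close _ _ (congrArg Prod.fst heq),
    close _ _ (congrArg Prod.snd heq)⟩

namespace Complex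

variable {β : ℂ}

theorem eq_ofReal_add_ofReal_mul (hβ : β.im ≠ 0) (z : ℂ) :
    z = ↑(z.re - z.im / β.im * β.re) + ↑(z.im / β.im) * β := by
  apply Complex.ext <;> simp [hβ]

theorem ofReal_add_ofReal_mul_eq_zero (hβ : β.im ≠ 0) {x y : ℝ} (h : (x : ℂ) + y * β = 0) :
    x = 0 ∧ y = 0 := by
  have hy : y = 0 := by simpa [hβ] using congrArg Complex.im h
  subst hy
  simpa using h

theorem norm_ofReal_add_ofReal_mul_le (β : ℂ) (x y : ℝ) :
    ‖(x : ℂ) + y * β‖ ≤ |x| + |y| * ‖β‖ := by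
  simpa [norm_mul] using norm_add_le (x : ℂ) (y * β)

theorem exists_intCast_add_intCast_mul_approx (hβ : β.im ≠ 0) (α : ℂ) {N : ℕ} (hN : 0 < N) :
    ∃ m n k l : ℤ, (m, n) ≠ 0 ∧ |m| ≤ N ∧ |n| ≤ N ∧
      ‖(m + n * β) * α - (k + l * β)‖ ≤ (1 + ‖β‖) / N := by
  set u : ℂ → ℝ := fun w => w.re - w.im / β.im * β.re
  set v : ℂ → ℝ := fun w => w.im / β.im
  set z : ℤ × ℤ → ℂ := fun p => (p.1 + p.2 * β) * α
  set box := Finset.Icc (0 : ℤ) N ×ˢ Finset.Icc (0 : ℤ) N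
  have hcard : N ^ 2 < box.card := by
    simp only [box, Finset.card_product, Int.card_Icc]
    rw [show ((N : ℤ) + 1 - 0).toNat = N + 1 by omega]
    nlinarith
  obtain ⟨p, hp, p', hp', hne, k, l, hu, hv⟩ :=
    box.exists_ne_abs_sub_sub_intCast_lt hN hcard (u ∘ z) (v ∘ z)
  simp only [box, Finset.mem_product, Finset.mem_Icc] at hp hp'
  refine ⟨p.1 - p'.1, p.2 - p'.2, k, l, fun h => hne ?_, by rw [abs_le]; omega,
    by rw [abs_le]; omega, ?_⟩
  · simpa [Prod.ext_iff, sub_eq_zero] using h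
  have hsplit : (((p.1 - p'.1 : ℤ) : ℂ) + ((p.2 - p'.2 : ℤ) : ℂ) * β) * α - (k + l * β) =
      ↑(u (z p) - u (z p') - k) + ↑(v (z p) - v (z p') - l) * β := by
    rw [show (((p.1 - p'.1 : ℤ) : ℂ) + ((p.2 - p'.2 : ℤ) : ℂ) * β) * α = z p - z p' by
      simp only [z]; push_cast; ring]
    have hz : ∀ w, w = ↑(u w) + ↑(v w) * β := eq_ofReal_add_ofReal_mul hβ
    conv_lhs => rw [hz (z p), hz (z p')]
    push_cast; ring
  rw [hsplit]
  calc _ ≤ _ := norm_ofReal_add_ofReal_mul_le β _ _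
    _ ≤ 1 / N + 1 / N * ‖β‖ := by gcongr; exacts [hu.le, hv.le]
    _ = (1 + ‖β‖) / N := by ring

theorem norm_sub_div_le_of_norm_mul_sub_le {α a q : ℂ} {c N : ℝ} (hq : q ≠ 0) (hN : 0 < N)
    (hqN : ‖q‖ ≤ N * c) (h : ‖q * α - a‖ ≤ c / N) : ‖α - a / q‖ ≤ c ^ 2 / ‖q‖ ^ 2 := by
  have hq' : 0 < ‖q‖ := norm_pos_iff.2 hq
  have hc : 0 ≤ c / N := (norm_nonneg _).trans h
  calc ‖α - a / q‖ = ‖q * α - a‖ / ‖q‖ := by rw [← norm_div]; congr 1; field_simp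
    _ ≤ c / N / ‖q‖ := by gcongr
    _ = c / N * ‖q‖ / ‖q‖ ^ 2 := by field_simp
    _ ≤ c / N * (N * c) / ‖q‖ ^ 2 := by gcongr
    _ = c ^ 2 / ‖q‖ ^ 2 := by field_simp

end Complex

section ImaginaryQuadratic

variable {K : Type*} [Field K] [NumberField K] (ι : K →+* ℂ)

theorem algebraNorm_eq_normSq (hdeg : Module.finrank ℚ K = 2) (him : ∃ x : K, (ι x).im ≠ 0)
    (y : K) : (Algebra.norm ℚ y : ℝ) = Complex.normSq (ι y) := by
  classical
  obtain ⟨x, hx⟩ := him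
  let σ : K →ₐ[ℚ] ℂ := ι.toRatAlgHom
  let σbar : K →ₐ[ℚ] ℂ := ((starRingEnd ℂ : ℂ →+* ℂ).comp ι).toRatAlgHom
  have hne : σ ≠ σbar := fun h => hx <| by
    have := congrArg (fun τ : K →ₐ[ℚ] ℂ => (τ x).im) h
    simp only [σ, σbar, RingHom.toRatAlgHom_apply, RingHom.coe_comp, Function.comp_apply,
      Complex.conj_im] at this
    linarith
  have huniv : (Finset.univ : Finset (K →ₐ[ℚ] ℂ)) = {σ, σbar} := by
    refine (Finset.eq_of_subset_of_card_le (Finset.subset_univ _) ?_).symm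
    rw [Finset.card_univ, AlgHom.card, hdeg, Finset.card_pair hne]
  have hprod := Algebra.norm_eq_prod_embeddings ℚ ℂ y
  rw [huniv, Finset.prod_pair hne] at hprod
  have : ((Algebra.norm ℚ y : ℝ) : ℂ) = (Complex.normSq (ι y) : ℂ) := by
    rw [← Complex.mul_conj]; simpa [σ, σbar] using hprod
  exact_mod_cast this

theorem natAbs_algebraNorm_eq_sq_norm (hdeg : Module.finrank ℚ K = 2)
    (him : ∃ x : K, (ι x).im ≠ 0) (q : 𝓞 K) :
    ((Algebra.norm ℤ q).natAbs : ℝ) = ‖ι q‖ ^ 2 := by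
  have h := algebraNorm_eq_normSq ι hdeg him (q : K)
  rw [← Algebra.coe_norm_int, Rat.cast_intCast] at h
  rw [Nat.cast_natAbs, Int.cast_abs, h, Complex.sq_norm, abs_of_nonneg (Complex.normSq_nonneg _)]

theorem exists_ringOfIntegers_im_ne_zero (him : ∃ x : K, (ι x).im ≠ 0) :
    ∃ ω : 𝓞 K, (ι ω).im ≠ 0 := by
  by_contra! h
  obtain ⟨x, hx⟩ := him
  obtain ⟨a, b, -, rfl⟩ := IsFractionRing.div_surjective (A := 𝓞 K) x
  exact hx (by simp [map_div₀, Complex.div_im, h a, h b])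

theorem exists_ringOfIntegers_approx {ω : 𝓞 K} (hω : (ι ω).im ≠ 0) (α : ℂ) {N : ℕ}
    (hN : 0 < N) : ∃ a q : 𝓞 K, q ≠ 0 ∧ ‖ι q‖ ≤ N * (1 + ‖ι ω‖) ∧
      ‖ι q * α - ι a‖ ≤ (1 + ‖ι ω‖) / N := by
  obtain ⟨m, n, k, l, hmn, hm, hn, happrox⟩ :=
    Complex.exists_intCast_add_intCast_mul_approx hω α hN
  have hι : ∀ i j : ℤ, ι ((i + j * ω : 𝓞 K) : K) = ((i : ℝ) : ℂ) + ((j : ℝ) : ℂ) * ι ω :=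
    fun i j => by simp
  refine ⟨k + l * ω, m + n * ω, fun hq => hmn ?_, ?_, ?_⟩
  · have hq' : ((m : ℝ) : ℂ) + ((n : ℝ) : ℂ) * ι ω = 0 := by rw [← hι, hq]; simp
    simpa [Prod.ext_iff] using Complex.ofReal_add_ofReal_mul_eq_zero hω hq'
  · rw [hι]
    calc _ ≤ _ := Complex.norm_ofReal_add_ofReal_mul_le _ _ _
      _ ≤ N + N * ‖ι ω‖ := by gcongr <;> exact_mod_cast ‹_›
      _ = N * (1 + ‖ι ω‖) := by ring
  · simpa [hι] using happrox

end ImaginaryQuadratic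

/-- Dirichlet approximation in imaginary quadratic number fields. -/
theorem stmt0 (K : Type*) [Field K] [NumberField K]
    (hdeg : Module.finrank ℚ K = 2)
    (ι : K →+* ℂ) (him : ∃ x : K, (ι x).im ≠ 0) :
    ∃ C : ℝ, 0 < C ∧ ∀ α : ℂ, α ∉ Set.range ι →
      {aq : 𝓞 K × 𝓞 K | aq.2 ≠ 0 ∧
        ‖α - ι (aq.1 : K) / ι (aq.2 : K)‖ ≤
          C / ((Algebra.norm ℤ aq.2).natAbs : ℝ)}.Infinite := by
  obtain ⟨ω, hω⟩ := exists_ringOfIntegers_im_ne_zero ι him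
  refine ⟨(1 + ‖ι ω‖) ^ 2, by positivity, fun α hα => ?_⟩
  refine Set.infinite_of_forall_exists_pos_lt (fun aq => ‖ι aq.2 * α - ι aq.1‖) ?_ ?_
  · rintro ⟨a, q⟩ ⟨hq, -⟩
    refine norm_pos_iff.2 fun h => hα ⟨a / q, ?_⟩
    have hq' : ι q ≠ 0 := by simpa using hq
    rw [map_div₀, div_eq_iff hq']
    linear_combination -h
  · intro ε hε
    obtain ⟨N, hN⟩ := exists_nat_gt ((1 + ‖ι ω‖) / ε)
    have hN0 : (0 : ℝ) < N := lt_trans (by positivity) hN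
    obtain ⟨a, q, hq, hqN, happrox⟩ :=
      exists_ringOfIntegers_approx ι hω α (N := N) (by exact_mod_cast hN0)
    refine ⟨(a, q), ⟨hq, ?_⟩, happrox.trans_lt ?_⟩
    · rw [natAbs_algebraNorm_eq_sq_norm ι hdeg him]
      exact Complex.norm_sub_div_le_of_norm_mul_sub_le (by simpa using hq) hN0 hqN happrox
    · rwa [div_lt_iff₀ hN0, mul_comm, ← div_lt_iff₀ hε]
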